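/- arXiv:2205.10899 — 3 statements merged into one kernel-verified Lean document; each statement's English description precedes it below -/
import Mathlib

section
/- Two points y, y′ ∈ ℝ^n with positive coordinates define the same evaluation homomorphism on the semiring of symmetric polynomials in n variables if and only if y′ is a coordinate permutation of y. -/
/-!
At `y` the elementary symmetric polynomials evaluate to the elementary symmetric functions of the
multiset of coordinates of `y`, and by Vieta these determine that multiset as the roots of
`∏ i, (X - y i)`. Two maps `Fin n → ℝ` with the same multiset of values have fibres of equal
size, so they differ by a permutation.
-/

open MvPolynomial Polynomial

theorem Equiv.Perm.exists_eq_comp_of_map_univ_eq {ι α : Type*} [Fintype ι] {f g : ι → α}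
    (h : Finset.univ.val.map f = Finset.univ.val.map g) : ∃ σ : Equiv.Perm ι, g = f ∘ σ := by
  classical
  have hfiber : ∀ c, Fintype.card {i // g i = c} = Fintype.card {i // f i = c} := fun c => by
    have hcount := congrArg (Multiset.count c) h
    simp only [Multiset.count_map, eq_comm (a := c)] at hcount
    simp only [Fintype.card_subtype]
    exact hcount.symm
  refine ⟨Equiv.ofFiberEquiv fun c => Fintype.equivOfCardEq (hfiber c), funext fun i => ?_⟩
  exact (Equiv.ofFiberEquiv_map _ i).symm

theorem Multiset.eq_of_card_eq_of_esymm_eq {R : Type*} [CommRing R] [IsDomain R]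
    {s t : Multiset R} (hcard : card s = card t) (h : ∀ k, s.esymm k = t.esymm k) : s = t := by
  rw [← roots_multiset_prod_X_sub_C s, ← roots_multiset_prod_X_sub_C t,
    prod_X_sub_X_eq_sum_esymm, prod_X_sub_X_eq_sum_esymm, hcard]
  simp only [h]

theorem stmt6_general (n : ℕ) (y y' : Fin n → ℝ) :
    (∀ p : MvPolynomial (Fin n) ℤ, p.IsSymmetric →
        MvPolynomial.aeval y p = MvPolynomial.aeval y' p) ↔
      ∃ σ : Equiv.Perm (Fin n), y' = y ∘ σ := by
  constructor
  · intro h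
    refine Equiv.Perm.exists_eq_comp_of_map_univ_eq <|
      Multiset.eq_of_card_eq_of_esymm_eq (by simp) fun k => ?_
    simpa only [aeval_esymm_eq_multiset_esymm] using h _ (esymm_isSymmetric (Fin n) ℤ k)
  · rintro ⟨σ, rfl⟩ p hp
    rw [← aeval_rename, hp σ]

/-- Two points with positive coordinates define the same evaluation homomorphism on
the semiring of symmetric polynomials in `n` variables iff they differ by a coordinate
permutation. -/
theorem stmt6 (n : ℕ) (y y' : Fin n → ℝ) (hy : ∀ i, 0 < y i) (hy' : ∀ i, 0 < y' i) :
    (∀ p : MvPolynomial (Fin n) ℤ, p.IsSymmetric →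
        MvPolynomial.aeval y p = MvPolynomial.aeval y' p) ↔
      ∃ σ : Equiv.Perm (Fin n), y' = y ∘ σ :=
  stmt6_general n y y'
end

section
/- For symmetric polynomials with nonnegative coefficients, the map sending a nonzero polynomial p = Σ_α p_α x^α to max{ Σ_i α_i y_i : p_α ≠ 0 } (for a fixed y ∈ ℝ^n), and 0 to −∞, is a semiring homomorphism into the tropical semiring (ℝ ∪ {−∞}, max, +): it sends sums to max and products to sums. -/
noncomputable section

/-- Tropical evaluation in direction `y`: linear maximization of `Σ_i α_i y_i` over the
exponent vectors `α` of the monomials of `p` (i.e. over the Newton polytope), with the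
zero polynomial sent to `⊥ = -∞`. -/
def tropEval (n : ℕ) (y : Fin n → ℝ) (p : MvPolynomial (Fin n) ℝ) : WithBot ℝ :=
  p.support.sup fun d => ((∑ i, (d i : ℝ) * y i : ℝ) : WithBot ℝ)

/-! With nonnegative coefficients nothing cancels, so the support of `p + q` is the union of the
supports and that of `p * q` their Minkowski sum. A linear functional maximized over a union
gives the larger of the two maxima, and over a Minkowski sum the sum of the two maxima. -/

open scoped Pointwise

theorem Finset.sup_add_eq_sup_add_sup {α M : Type*} [DecidableEq α] [AddMonoid α]
    [AddCommMonoid M] [LinearOrder M] [IsOrderedAddMonoid M] (f : α →+ M) (s t : Finset α) :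
    (s + t).sup (fun x => (f x : WithBot M)) =
      s.sup (fun x => (f x : WithBot M)) + t.sup (fun x => (f x : WithBot M)) := by
  apply le_antisymm
  · refine Finset.sup_add_le.mpr fun x hx y hy => ?_
    rw [map_add, WithBot.coe_add]
    exact add_le_add (Finset.le_sup (f := fun x => (f x : WithBot M)) hx)
      (Finset.le_sup (f := fun x => (f x : WithBot M)) hy)
  · rcases s.eq_empty_or_nonempty with rfl | hs
    · simp
    rcases t.eq_empty_or_nonempty with rfl | ht
    · simp
    obtain ⟨x, hx, hx_max⟩ := s.exists_mem_eq_sup hs fun x => (f x : WithBot M)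
    obtain ⟨y, hy, hy_max⟩ := t.exists_mem_eq_sup ht fun x => (f x : WithBot M)
    rw [hx_max, hy_max, ← WithBot.coe_add, ← map_add]
    exact Finset.le_sup (f := fun x => (f x : WithBot M)) (Finset.add_mem_add hx hy)

namespace MvPolynomial

variable {σ R M : Type*} [CommSemiring R] [AddCommMonoid M] [LinearOrder M] (w : σ → M)

theorem weightedTotalDegree'_one [Nontrivial R] :
    weightedTotalDegree' w (1 : MvPolynomial σ R) = 0 := by
  simp [weightedTotalDegree', support_one]

variable [PartialOrder R] {p q : MvPolynomial σ R}

theorem support_add_of_nonneg [DecidableEq σ] [IsOrderedAddMonoid R]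
    (hp : ∀ d, 0 ≤ coeff d p) (hq : ∀ d, 0 ≤ coeff d q) :
    (p + q).support = p.support ∪ q.support := by
  ext d
  simp only [mem_support_iff, coeff_add, Finset.mem_union, Ne,
    add_eq_zero_iff_of_nonneg (hp d) (hq d), not_and_or]

theorem coeff_mul_pos_of_nonneg [DecidableEq σ] [IsStrictOrderedRing R]
    (hp : ∀ d, 0 ≤ coeff d p) (hq : ∀ d, 0 ≤ coeff d q) {a b : σ →₀ ℕ}
    (ha : a ∈ p.support) (hb : b ∈ q.support) : 0 < coeff (a + b) (p * q) := by
  have hab : 0 < coeff a p * coeff b q :=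
    mul_pos ((hp a).lt_of_ne' (mem_support_iff.mp ha)) ((hq b).lt_of_ne' (mem_support_iff.mp hb))
  have hmem : (a, b) ∈ Finset.HasAntidiagonal.antidiagonal (a + b) :=
    Finset.HasAntidiagonal.mem_antidiagonal.mpr rfl
  rw [coeff_mul]
  exact hab.trans_le <| Finset.single_le_sum (f := fun x => coeff x.1 p * coeff x.2 q)
    (fun x _ => mul_nonneg (hp x.1) (hq x.2)) hmem

theorem support_mul_of_nonneg [DecidableEq σ] [IsStrictOrderedRing R]
    (hp : ∀ d, 0 ≤ coeff d p) (hq : ∀ d, 0 ≤ coeff d q) :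
    (p * q).support = p.support + q.support := by
  refine (support_mul p q).antisymm fun d hd => ?_
  obtain ⟨a, ha, b, hb, rfl⟩ := Finset.mem_add.mp hd
  exact mem_support_iff.mpr (coeff_mul_pos_of_nonneg hp hq ha hb).ne'

theorem weightedTotalDegree'_add_of_nonneg [IsOrderedAddMonoid R]
    (hp : ∀ d, 0 ≤ coeff d p) (hq : ∀ d, 0 ≤ coeff d q) :
    weightedTotalDegree' w (p + q) = max (weightedTotalDegree' w p) (weightedTotalDegree' w q) := by
  classical
  rw [weightedTotalDegree', support_add_of_nonneg hp hq, Finset.sup_union]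
  rfl

theorem weightedTotalDegree'_mul_of_nonneg [IsOrderedAddMonoid M] [IsStrictOrderedRing R]
    (hp : ∀ d, 0 ≤ coeff d p) (hq : ∀ d, 0 ≤ coeff d q) :
    weightedTotalDegree' w (p * q) = weightedTotalDegree' w p + weightedTotalDegree' w q := by
  classical
  rw [weightedTotalDegree', support_mul_of_nonneg hp hq]
  exact Finset.sup_add_eq_sup_add_sup (Finsupp.weight w) _ _

end MvPolynomial

theorem tropEval_eq_weightedTotalDegree' (n : ℕ) (y : Fin n → ℝ) (p : MvPolynomial (Fin n) ℝ) :
    tropEval n y p = p.weightedTotalDegree' y := by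
  simp only [tropEval, MvPolynomial.weightedTotalDegree', Finsupp.weight_eq_sum, nsmul_eq_mul]

theorem stmt7_general (n : ℕ) (y : Fin n → ℝ) (p q : MvPolynomial (Fin n) ℝ)
    (hpc : ∀ d, 0 ≤ MvPolynomial.coeff d p) (hqc : ∀ d, 0 ≤ MvPolynomial.coeff d q) :
    tropEval n y (p + q) = max (tropEval n y p) (tropEval n y q) ∧
    tropEval n y (p * q) = tropEval n y p + tropEval n y q ∧
    tropEval n y 1 = 0 ∧ tropEval n y 0 = ⊥ := by
  simp only [tropEval_eq_weightedTotalDegree']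
  exact ⟨MvPolynomial.weightedTotalDegree'_add_of_nonneg y hpc hqc,
    MvPolynomial.weightedTotalDegree'_mul_of_nonneg y hpc hqc,
    MvPolynomial.weightedTotalDegree'_one y, MvPolynomial.weightedTotalDegree'_zero y⟩

/-- For symmetric polynomials with nonnegative coefficients, tropical evaluation is a
semiring homomorphism into the tropical reals `(ℝ ∪ {-∞}, max, +)`: it sends sums to
max and products to sums, `1` to `0` and `0` to `-∞`. -/
theorem stmt7 (n : ℕ) (y : Fin n → ℝ) (p q : MvPolynomial (Fin n) ℝ)
    (hps : p.IsSymmetric) (hqs : q.IsSymmetric)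
    (hpc : ∀ d, 0 ≤ MvPolynomial.coeff d p) (hqc : ∀ d, 0 ≤ MvPolynomial.coeff d q) :
    tropEval n y (p + q) = max (tropEval n y p) (tropEval n y q) ∧
    tropEval n y (p * q) = tropEval n y p + tropEval n y q ∧
    tropEval n y 1 = 0 ∧ tropEval n y 0 = ⊥ :=
  stmt7_general n y p q hpc hqc

end
end

section
/- In a preordered commutative semiring S with 1 ≥ 0, if the inequalities defining power universality of u (namely a ≤ u^{k_a} and a·u^{k_a} ≥ 1 for suitable k_a) hold for all elements a of a generating set containing 2 = 1 + 1, and u ≥ 1, then u is power universal, i.e. the inequalities hold for all nonzero a ∈ S. -/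
/-!
The set of elements `a` that admit an exponent `k` with `a ≤ u ^ k` and `1 ≤ a * u ^ k` is
closed under multiplication (multiply the two pairs of bounds) and, as soon as it contains `2`,
under addition: after raising both exponents to a common `n`, which `u ≥ 1` allows,
`a + b ≤ 2 * u ^ n ≤ u ^ (k₂ + n)`, while `1 ≤ a * u ^ n` and `0 ≤ 1 ≤ b * u ^ n` bound
`(a + b) * u ^ (k₂ + n)` from below. Induction on the generation of `a` from `G` concludes.
-/

/-- Elements obtained from a subset `G` of a semiring by finitely many additions and
multiplications. -/
inductive Gen {S : Type*} [CommSemiring S] (G : Set S) : S → Prop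
  | base {a : S} : a ∈ G → Gen G a
  | add {a b : S} : Gen G a → Gen G b → Gen G (a + b)
  | mul {a b : S} : Gen G a → Gen G b → Gen G (a * b)

section

variable {S : Type*} [CommSemiring S] [Preorder S]

def IsPowerBounded (u a : S) : Prop :=
  ∃ k : ℕ, a ≤ u ^ k ∧ 1 ≤ a * u ^ k

variable [MulLeftMono S] {u a b : S}

lemma powerBounds_mono (hu : 1 ≤ u) {k n : ℕ} (hkn : k ≤ n)
    (h : a ≤ u ^ k ∧ 1 ≤ a * u ^ k) : a ≤ u ^ n ∧ 1 ≤ a * u ^ n :=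
  have hpow : u ^ k ≤ u ^ n := pow_le_pow_right' hu hkn
  ⟨h.1.trans hpow, h.2.trans (mul_le_mul_right hpow a)⟩

lemma IsPowerBounded.mul (ha : IsPowerBounded u a) (hb : IsPowerBounded u b) :
    IsPowerBounded u (a * b) := by
  obtain ⟨k, hak, hka⟩ := ha
  obtain ⟨m, hbm, hmb⟩ := hb
  refine ⟨k + m, ?_, ?_⟩
  · rw [pow_add]
    exact mul_le_mul' hak hbm
  · calc (1 : S) ≤ (a * u ^ k) * (b * u ^ m) := one_le_mul hka hmb
      _ = a * b * u ^ (k + m) := by ring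

lemma IsPowerBounded.add [AddLeftMono S] (h01 : (0 : S) ≤ 1) (hu : 1 ≤ u)
    (h2 : IsPowerBounded u 2) (ha : IsPowerBounded u a) (hb : IsPowerBounded u b) :
    IsPowerBounded u (a + b) := by
  obtain ⟨k₂, h2k, -⟩ := h2
  obtain ⟨k, hak⟩ := ha
  obtain ⟨m, hbm⟩ := hb
  obtain ⟨han, hna⟩ := powerBounds_mono hu (Nat.le_add_right k m) hak
  obtain ⟨hbn, hnb⟩ := powerBounds_mono hu (Nat.le_add_left m k) hbm
  set n := k + m
  refine ⟨k₂ + n, ?_, ?_⟩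
  · calc a + b ≤ u ^ n + u ^ n := add_le_add han hbn
      _ = 2 * u ^ n := (two_mul _).symm
      _ ≤ u ^ k₂ * u ^ n := mul_le_mul_left h2k _
      _ = u ^ (k₂ + n) := (pow_add u k₂ n).symm
  · calc (1 : S) ≤ a * u ^ n := hna
      _ ≤ a * u ^ n + b * u ^ n := le_add_of_nonneg_right (h01.trans hnb)
      _ ≤ (a * u ^ n + b * u ^ n) * u ^ k₂ :=
          le_mul_of_one_le_right' (one_le_pow_of_one_le' hu k₂)
      _ = (a + b) * u ^ (k₂ + n) := by ring

lemma Gen.isPowerBounded [AddLeftMono S] (h01 : (0 : S) ≤ 1) (hu : 1 ≤ u) {G : Set S}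
    (h2 : (2 : S) ∈ G) (hG : ∀ g ∈ G, IsPowerBounded u g) (ha : Gen G a) :
    IsPowerBounded u a := by
  induction ha with
  | base hg => exact hG _ hg
  | add _ _ iha ihb => exact IsPowerBounded.add h01 hu (hG 2 h2) iha ihb
  | mul _ _ iha ihb => exact iha.mul ihb

end

/-- In a preordered commutative semiring with `1 ≥ 0`, if `u ≥ 1` and the power
universality inequalities hold for every element of a generating set containing
`2 = 1 + 1`, then they hold for every nonzero element, i.e. `u` is power universal. -/
theorem stmt19 {S : Type*} [CommSemiring S] [Preorder S]
    (haddm : ∀ a b c : S, a ≤ b → a + c ≤ b + c)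
    (hmulm : ∀ a b c : S, a ≤ b → a * c ≤ b * c)
    (h01 : (0 : S) ≤ 1)
    (G : Set S) (hGen : ∀ a : S, a ≠ 0 → Gen G a) (h2 : (2 : S) ∈ G)
    (u : S) (hu : 1 ≤ u)
    (hG : ∀ a ∈ G, ∃ k : ℕ, a ≤ u ^ k ∧ 1 ≤ a * u ^ k) :
    ∀ a : S, a ≠ 0 → ∃ k : ℕ, a ≤ u ^ k ∧ 1 ≤ a * u ^ k := by
  have : AddLeftMono S := ⟨fun c a b h => by simpa only [add_comm c] using haddm a b c h⟩
  have : MulLeftMono S := ⟨fun c a b h => by simpa only [mul_comm c] using hmulm a b c h⟩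
  exact fun a ha => (hGen a ha).isPowerBounded h01 hu h2 hG
end
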